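/- Consider a test-time compute game with N providers. There exists a finite rationality level β_0 > 0 such that for all β > β_0, any pure Nash equilibrium of the game with boundedly rational users (softmax market shares with inverse temperature β) is also a pure Nash equilibrium of the game with perfectly rational users (winner-take-all market shares). -/

import Mathlib

open scoped Classical

/-- Utility of provider `i` under bounded rationality `β`: softmax market share
`exp(βV_i(θ_i)) / (1 + ∑_j exp(βV_j(θ_j)))` (abstention value `V₀ = 0`) times the profit
`p_i(θ_i) − c_i(θ_i)`, with `V_i(θ) = q_i(θ) − p_i(θ)`. -/
noncomputable def boundedU (N : ℕ) (Θ : Type*) [Fintype Θ] (p c q : Fin N → Θ → ℝ)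
    (β : ℝ) (i : Fin N) (θv : Fin N → Θ) : ℝ :=
  (Real.exp (β * (q i (θv i) - p i (θv i))) /
      (1 + ∑ j, Real.exp (β * (q j (θv j) - p j (θv j)))))
    * (p i (θv i) - c i (θv i))

/-- Utility of provider `i` under perfect rationality: winner-take-all market share
`𝟙{V_i(θ_i) > max_{j ≠ i} V_j(θ_j)}` times the profit. -/
noncomputable def perfectU (N : ℕ) (Θ : Type*) (p c q : Fin N → Θ → ℝ)
    (i : Fin N) (θv : Fin N → Θ) : ℝ :=
  (if ∀ j, j ≠ i → q j (θv j) - p j (θv j) < q i (θv i) - p i (θv i)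
    then (1 : ℝ) else 0) * (p i (θv i) - c i (θv i))

/-! As `β → ∞` the softmax share of a provider tends to its winner-take-all share: the
provider with the strictly largest (positive) value gets share `1`, every other provider `0`.
Hence each bounded-rationality utility converges to the corresponding perfect-rationality
utility. A profitable deviation in the perfect-rationality game is a strict inequality between
two such limits, so it is also profitable in the bounded-rationality game for all large `β`;
since there are only finitely many profiles, players and deviations, one threshold `β₀` serves
them all. -/

open Filter Topology Real

lemma tendsto_exp_mul_atTop_of_neg {d : ℝ} (hd : d < 0) :
    Tendsto (fun β : ℝ => exp (β * d)) atTop (𝓝 0) :=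
  tendsto_exp_atBot.comp (tendsto_id.atTop_mul_const_of_neg hd)

/-- The `1` in the denominator is `exp (β * 0)`, the share weight of the outside option. -/
noncomputable def softmaxShare {ι : Type*} [Fintype ι] (β : ℝ) (V : ι → ℝ) (i : ι) : ℝ :=
  exp (β * V i) / (1 + ∑ j, exp (β * V j))

section softmaxShare

variable {ι : Type*} [Fintype ι] (V : ι → ℝ) (i : ι)

lemma softmaxShare_eq_inv (β : ℝ) :
    softmaxShare β V i = (exp (-(β * V i)) + ∑ j, exp (β * (V j - V i)))⁻¹ := by
  have hden : exp (-(β * V i)) + ∑ j, exp (β * (V j - V i))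
      = (1 + ∑ j, exp (β * V j)) * exp (-(β * V i)) := by
    rw [add_mul, one_mul, Finset.sum_mul]
    congr 1
    refine Finset.sum_congr rfl fun j _ => ?_
    rw [← exp_add]
    ring_nf
  rw [softmaxShare, hden, mul_inv, exp_neg, inv_inv, div_eq_mul_inv, mul_comm]

lemma softmaxShare_le_exp_mul_sub {β : ℝ} (k : ι) :
    softmaxShare β V i ≤ exp (β * (V i - V k)) := by
  have hden : exp (β * V k) ≤ 1 + ∑ j, exp (β * V j) := by
    have := Finset.single_le_sum (f := fun j => exp (β * V j))
      (fun j _ => (exp_pos _).le) (Finset.mem_univ k)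
    linarith
  calc softmaxShare β V i ≤ exp (β * V i) / exp (β * V k) :=
        div_le_div_of_nonneg_left (exp_pos _).le (exp_pos _) hden
    _ = exp (β * (V i - V k)) := by rw [← exp_sub, mul_sub]

lemma tendsto_softmaxShare_of_forall_lt (hpos : 0 < V i) (hwin : ∀ j, j ≠ i → V j < V i) :
    Tendsto (fun β => softmaxShare β V i) atTop (𝓝 1) := by
  have houtside : Tendsto (fun β : ℝ => exp (-(β * V i))) atTop (𝓝 0) := by
    simpa only [mul_neg] using tendsto_exp_mul_atTop_of_neg (neg_neg_of_pos hpos)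
  have hothers : Tendsto (fun β : ℝ => ∑ j, exp (β * (V j - V i))) atTop
      (𝓝 (∑ j, if j = i then 1 else 0)) := by
    refine tendsto_finsetSum _ fun j _ => ?_
    by_cases hj : j = i
    · subst hj
      simp
    · rw [if_neg hj]
      exact tendsto_exp_mul_atTop_of_neg (sub_neg.mpr (hwin j hj))
  rw [Finset.sum_ite_eq' Finset.univ i, if_pos (Finset.mem_univ i)] at hothers
  simp only [softmaxShare_eq_inv]
  simpa using (houtside.add hothers).inv₀ (by norm_num)

lemma tendsto_softmaxShare_of_lt {k : ι} (hk : V i < V k) :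
    Tendsto (fun β => softmaxShare β V i) atTop (𝓝 0) :=
  squeeze_zero (fun β => by unfold softmaxShare; positivity)
    (fun β => softmaxShare_le_exp_mul_sub V i k)
    (tendsto_exp_mul_atTop_of_neg (sub_neg.mpr hk))

lemma tendsto_softmaxShare [Decidable (∀ j, j ≠ i → V j < V i)] (hpos : 0 < V i)
    (hne : ∀ j, j ≠ i → V j ≠ V i) :
    Tendsto (fun β => softmaxShare β V i) atTop
      (𝓝 (if ∀ j, j ≠ i → V j < V i then 1 else 0)) := by
  split_ifs with hwin
  · exact tendsto_softmaxShare_of_forall_lt V i hpos hwin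
  · obtain ⟨k, hki, hk⟩ := not_forall₂.mp hwin
    exact tendsto_softmaxShare_of_lt V i ((not_lt.mp hk).lt_of_ne (hne k hki).symm)

end softmaxShare

lemma tendsto_boundedU_perfectU (N : ℕ) (Θ : Type*) [Fintype Θ] (p c q : Fin N → Θ → ℝ)
    (hties : ∀ (i j : Fin N) (t t' : Θ), i ≠ j → q i t - p i t ≠ q j t' - p j t')
    (hV₀ : ∀ (i : Fin N) (t : Θ), 0 < q i t - p i t) (i : Fin N) (θv : Fin N → Θ) :
    Tendsto (fun β => boundedU N Θ p c q β i θv) atTop (𝓝 (perfectU N Θ p c q i θv)) :=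
  (tendsto_softmaxShare (fun j => q j (θv j) - p j (θv j)) i (hV₀ i (θv i))
    fun j hj => hties j i (θv j) (θv i) hj).mul_const _

lemma eventually_forall_lt_of_tendsto {X γ α : Type*} [Finite X] [TopologicalSpace α]
    [LinearOrder α] [OrderClosedTopology α] {l : Filter γ} {f g : X → γ → α} {a b : X → α}
    (hf : ∀ x, Tendsto (f x) l (𝓝 (a x))) (hg : ∀ x, Tendsto (g x) l (𝓝 (b x))) :
    ∀ᶠ β in l, ∀ x, a x < b x → f x β < g x β := by
  refine eventually_all.mpr fun x => ?_
  by_cases hab : a x < b x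
  · filter_upwards [(hf x).eventually_lt (hg x) hab] with β hβ _ using hβ
  · exact Eventually.of_forall fun β h => absurd h hab

theorem high_rationality_equilibria_general (N : ℕ) (Θ : Type*) [Fintype Θ]
    (p c q : Fin N → Θ → ℝ)
    (hties : ∀ (i j : Fin N) (t t' : Θ), i ≠ j → q i t - p i t ≠ q j t' - p j t')
    (hV₀ : ∀ (i : Fin N) (t : Θ), 0 < q i t - p i t) :
    ∃ β₀ : ℝ, 0 < β₀ ∧ ∀ β : ℝ, β₀ < β →
      ∀ θd : Fin N → Θ,
        (∀ (i : Fin N) (t' : Θ),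
          boundedU N Θ p c q β i (Function.update θd i t') ≤ boundedU N Θ p c q β i θd) →
        (∀ (i : Fin N) (t' : Θ),
          perfectU N Θ p c q i (Function.update θd i t') ≤ perfectU N Θ p c q i θd) := by
  have hlim := tendsto_boundedU_perfectU N Θ p c q hties hV₀
  have hdeviations := eventually_forall_lt_of_tendsto (X := (Fin N → Θ) × Fin N × Θ)
    (fun x => hlim x.2.1 x.1) (fun x => hlim x.2.1 (Function.update x.1 x.2.1 x.2.2))
  obtain ⟨β₀, hβ₀, hβ⟩ := (atTop_basis_Ioi' 0).eventually_iff.mp hdeviations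
  exact ⟨β₀, hβ₀, fun β hβ₀β θd hNE i t' =>
    not_lt.mp fun hdev => (hNE i t').not_gt (hβ hβ₀β (θd, i, t') hdev)⟩

/-- **High-rationality equilibria are perfect-rationality equilibria.** For a test-time
compute game with no ties in offered values and positive profits, there is a finite
rationality level `β₀ > 0` such that for all `β > β₀`, any pure Nash equilibrium of the
game with boundedly rational users is also a pure Nash equilibrium of the game with
perfectly rational users. -/
theorem high_rationality_equilibria (N : ℕ) (Θ : Type*) [Fintype Θ] [Nonempty Θ]
    (p c q : Fin N → Θ → ℝ)
    (hties : ∀ (i j : Fin N) (t t' : Θ), i ≠ j → q i t - p i t ≠ q j t' - p j t')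
    (hprofit : ∀ (i : Fin N) (t : Θ), 0 < p i t - c i t)
    (hV₀ : ∀ (i : Fin N) (t : Θ), 0 < q i t - p i t) :
    ∃ β₀ : ℝ, 0 < β₀ ∧ ∀ β : ℝ, β₀ < β →
      ∀ θd : Fin N → Θ,
        (∀ (i : Fin N) (t' : Θ),
          boundedU N Θ p c q β i (Function.update θd i t') ≤ boundedU N Θ p c q β i θd) →
        (∀ (i : Fin N) (t' : Θ),
          perfectU N Θ p c q i (Function.update θd i t') ≤ perfectU N Θ p c q i θd) :=
  high_rationality_equilibria_general N Θ p c q hties hV₀
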